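/- Let ρ be a Borel probability measure on ℝ, let (X_n)_{n≥1} be an i.i.d. sequence of real random variables with common law ρ, let h : ℝ → ℝ be continuously differentiable with bounded derivative, let f ∈ L²(ρ), and let g : ℝ → [0,∞) with g ∈ L¹(ρ). For M, N ≥ 1 set c_n^{M,N} = (1/M)·1_{n ≤ M} − (1/N)·1_{n ≤ N}, and define Γ(u_M − u_N) = ( Σ_{n=1}^{max(M,N)} c_n^{M,N} h'(X_n) f(X_n) )² + Σ_{n=1}^{max(M,N)} (c_n^{M,N})² h'(X_n)² g(X_n). Then E[ Γ(u_M − u_N) ] → 0 as min(M,N) → ∞; i.e. for every ε > 0 there exists K such that for all M, N ≥ K, E[ Γ(u_M − u_N) ] < ε. -/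

import Mathlib

open MeasureTheory Filter Finset

lemma ind_sum (M K : ℕ) (v : ℝ) (hMK : M ≤ K) :
    ∑ n ∈ Icc 1 K, (if n ≤ M then v else 0) = M * v := by
  rw [← Finset.sum_filter]
  have : (Icc 1 K).filter (· ≤ M) = Icc 1 M := by
    ext n; simp only [mem_filter, mem_Icc]; omega
  rw [this, Finset.sum_const, Nat.card_Icc]
  simp [nsmul_eq_mul]

lemma sum_c_zero (M N : ℕ) (hM : 1 ≤ M) (hN : 1 ≤ N) :
    ∑ n ∈ Icc 1 (max M N),
      ((if n ≤ M then (M : ℝ)⁻¹ else 0) - (if n ≤ N then (N : ℝ)⁻¹ else 0)) = 0 := by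
  rw [Finset.sum_sub_distrib, ind_sum M _ _ (le_max_left M N),
    ind_sum N _ _ (le_max_right M N)]
  have hM' : (M:ℝ) ≠ 0 := Nat.cast_ne_zero.2 (by omega)
  have hN' : (N:ℝ) ≠ 0 := Nat.cast_ne_zero.2 (by omega)
  field_simp
  norm_num

lemma sum_c_sq_le (M N : ℕ) (hM : 1 ≤ M) (hN : 1 ≤ N) :
    ∑ n ∈ Icc 1 (max M N),
      ((if n ≤ M then (M : ℝ)⁻¹ else 0) - (if n ≤ N then (N : ℝ)⁻¹ else 0))^2
      ≤ 2 / M + 2 / N := by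
  have hM' : (0:ℝ) < M := by exact_mod_cast hM
  have hN' : (0:ℝ) < N := by exact_mod_cast hN
  calc ∑ n ∈ Icc 1 (max M N),
      ((if n ≤ M then (M : ℝ)⁻¹ else 0) - (if n ≤ N then (N : ℝ)⁻¹ else 0))^2
      ≤ ∑ n ∈ Icc 1 (max M N),
        (2 * (if n ≤ M then (M : ℝ)⁻¹ else 0)^2 + 2 * (if n ≤ N then (N : ℝ)⁻¹ else 0)^2) := by
        refine Finset.sum_le_sum fun n _ => ?_
        nlinarith [sq_nonneg ((if n ≤ M then (M : ℝ)⁻¹ else 0) + (if n ≤ N then (N : ℝ)⁻¹ else 0))]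
    _ = 2 / M + 2 / N := by
        rw [Finset.sum_add_distrib, ← Finset.mul_sum, ← Finset.mul_sum]
        have e1 : ∀ n:ℕ, ((if n ≤ M then (M : ℝ)⁻¹ else 0))^2 = (if n ≤ M then ((M:ℝ)⁻¹)^2 else 0) := by
          intro n; split <;> simp
        have e2 : ∀ n:ℕ, ((if n ≤ N then (N : ℝ)⁻¹ else 0))^2 = (if n ≤ N then ((N:ℝ)⁻¹)^2 else 0) := by
          intro n; split <;> simp
        simp_rw [e1, e2]
        rw [ind_sum M _ _ (le_max_left M N), ind_sum N _ _ (le_max_right M N)]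
        field_simp

lemma memL2_mul_int {Ω : Type*} [MeasurableSpace Ω] {μ : Measure Ω} {Y Z : Ω → ℝ}
    (hY : MemLp Y 2 μ) (hZ : MemLp Z 2 μ) :
    Integrable (fun ω => Y ω * Z ω) μ := by
  refine (hY.integrable_sq.add hZ.integrable_sq).mono' (hY.1.mul hZ.1) ?_
  filter_upwards with ω
  simp only [Pi.add_apply, Real.norm_eq_abs]
  nlinarith [sq_nonneg (Y ω - Z ω), sq_nonneg (Y ω + Z ω), abs_mul_abs_self (Y ω * Z ω),
    abs_nonneg (Y ω * Z ω), le_abs_self (Y ω * Z ω), neg_abs_le (Y ω * Z ω)]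

lemma expand_sq_integral {Ω : Type*} [MeasurableSpace Ω] (μ : Measure Ω)
    [IsProbabilityMeasure μ] (s : Finset ℕ) (a : ℕ → ℝ) (Y : ℕ → Ω → ℝ)
    (hY2 : ∀ n, MemLp (Y n) 2 μ)
    (hind : ∀ m n, m ≠ n → ProbabilityTheory.IndepFun (Y m) (Y n) μ)
    (I1 I2 : ℝ) (hI1 : ∀ n ∈ s, ∫ ω, Y n ω ∂μ = I1)
    (hI2 : ∀ n ∈ s, ∫ ω, (Y n ω)^2 ∂μ = I2) :
    ∫ ω, (∑ n ∈ s, a n * Y n ω)^2 ∂μ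
      = (∑ n ∈ s, a n)^2 * I1^2 + (∑ n ∈ s, (a n)^2) * (I2 - I1^2) := by
  have hmul : ∀ n m, Integrable (fun ω => a n * a m * (Y n ω * Y m ω)) μ :=
    fun n m => (memL2_mul_int (hY2 n) (hY2 m)).const_mul _
  have key : ∀ n m, n ∈ s → m ∈ s →
      ∫ ω, Y n ω * Y m ω ∂μ = if n = m then I2 else I1 * I1 := by
    intro n m hn hm
    split
    · next heq => subst heq; rw [← hI2 n hn]; simp [sq]
    · next hne =>
      have := ((hind n m hne).integral_mul_eq_mul_integral (hY2 n).1 (hY2 m).1)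
      rw [show (fun ω => Y n ω * Y m ω) = Y n * Y m from rfl, this, hI1 n hn, hI1 m hm]
  have step1 : ∫ ω, (∑ n ∈ s, a n * Y n ω)^2 ∂μ
      = ∑ n ∈ s, ∑ m ∈ s, a n * a m * ∫ ω, Y n ω * Y m ω ∂μ := by
    have e : ∀ ω, (∑ n ∈ s, a n * Y n ω)^2
        = ∑ n ∈ s, ∑ m ∈ s, a n * a m * (Y n ω * Y m ω) := by
      intro ω
      rw [sq, Finset.sum_mul_sum]
      exact Finset.sum_congr rfl fun n _ => Finset.sum_congr rfl fun m _ => by ring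
    simp_rw [e]
    rw [integral_finset_sum _ fun n _ => integrable_finset_sum _ fun m _ => hmul n m]
    exact Finset.sum_congr rfl fun n _ => by
      rw [integral_finset_sum _ fun m _ => hmul n m]
      exact Finset.sum_congr rfl fun m _ => integral_const_mul _ _
  rw [step1]
  have step2 : ∀ n ∈ s, ∑ m ∈ s, a n * a m * ∫ ω, Y n ω * Y m ω ∂μ
      = (∑ m ∈ s, a n * a m * (I1 * I1)) + a n ^ 2 * (I2 - I1^2) := by
    intro n hn
    have : ∀ m ∈ s, a n * a m * ∫ ω, Y n ω * Y m ω ∂μ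
        = a n * a m * (I1 * I1) + (if m = n then a n * a m * (I2 - I1^2) else 0) := by
      intro m hm
      rw [key n m hn hm]
      by_cases hmn : m = n
      · subst hmn; simp; ring
      · simp [hmn, Ne.symm hmn]
    rw [Finset.sum_congr rfl this, Finset.sum_add_distrib, Finset.sum_ite_eq' s n]
    simp [hn, sq]
  rw [Finset.sum_congr rfl step2, Finset.sum_add_distrib, ← Finset.sum_mul]
  have : ∑ n ∈ s, ∑ m ∈ s, a n * a m * (I1 * I1)
      = ((∑ n ∈ s, a n) * (∑ m ∈ s, a m)) * (I1 * I1) := by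
    rw [Finset.sum_mul_sum, Finset.sum_mul]
    exact Finset.sum_congr rfl fun n _ => by rw [Finset.sum_mul]
  rw [this]
  ring

/-- Key estimate for non-closability in Example B: with
`c_n^{M,N} = (1/M)·1_{n ≤ M} − (1/N)·1_{n ≤ N}`, the quadratic error
`Γ(u_M − u_N) = (∑ c_n h'(X_n) f(X_n))² + ∑ c_n² h'(X_n)² g(X_n)` satisfies
`E[Γ(u_M − u_N)] → 0` as `min(M,N) → ∞`. -/
theorem gamma_difference_tendsto_zero
    {Ω : Type*} [MeasureSpace Ω] (ℙ : Measure Ω) [IsProbabilityMeasure ℙ]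
    (ρ : Measure ℝ) [IsProbabilityMeasure ρ]
    (X : ℕ → Ω → ℝ) (hmeas : ∀ n, Measurable (X n))
    (hindep : ProbabilityTheory.iIndepFun X ℙ)
    (hlaw : ∀ n, Measure.map (X n) ℙ = ρ)
    (h : ℝ → ℝ) (hh : ContDiff ℝ 1 h) (hh' : ∃ C, ∀ x, |deriv h x| ≤ C)
    (f : ℝ → ℝ) (hf : MemLp f 2 ρ)
    (g : ℝ → ℝ) (hg0 : ∀ x, 0 ≤ g x) (hg : Integrable g ρ)
    (c : ℕ → ℕ → ℕ → ℝ)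
    (hc : ∀ M N n, c M N n =
      (if n ≤ M then (M : ℝ)⁻¹ else 0) - (if n ≤ N then (N : ℝ)⁻¹ else 0))
    (G : ℕ → ℕ → Ω → ℝ)
    (hG : ∀ M N ω, G M N ω =
      (∑ n ∈ Icc 1 (max M N), c M N n * deriv h (X n ω) * f (X n ω)) ^ 2
        + ∑ n ∈ Icc 1 (max M N), (c M N n) ^ 2 * (deriv h (X n ω)) ^ 2 * g (X n ω)) :
    ∀ ε > (0 : ℝ), ∃ K : ℕ, ∀ M N, K ≤ M → K ≤ N →
      ∫ ω, G M N ω ∂ℙ < ε := by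
  obtain ⟨C₀, hC₀⟩ := hh'
  set C := max C₀ 0 with hCdef
  have hC : ∀ x, |deriv h x| ≤ C := fun x => (hC₀ x).trans (le_max_left _ _)
  have hC0 : (0:ℝ) ≤ C := le_max_right _ _
  set f' := hf.1.mk f with hf'def
  have hf'm : StronglyMeasurable f' := hf.1.stronglyMeasurable_mk
  have hff' : f =ᵐ[ρ] f' := hf.1.ae_eq_mk
  have hf'2 : MemLp f' 2 ρ := hf.ae_eq hff'
  set g' := hg.1.mk g with hg'def
  have hg'm : StronglyMeasurable g' := hg.1.stronglyMeasurable_mk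
  have hgg' : g =ᵐ[ρ] g' := hg.1.ae_eq_mk
  have hg'int : Integrable g' ρ := hg.congr hgg'
  have hdm : Measurable (deriv h) := (hh.continuous_deriv le_rfl).measurable
  set φ : ℝ → ℝ := fun x => deriv h x * f' x with hφdef
  have hφm : Measurable φ := hdm.mul hf'm.measurable
  have hφ2 : MemLp φ 2 ρ := by
    refine MemLp.of_le (hf'2.const_mul C) hφm.aestronglyMeasurable ?_
    filter_upwards with x
    simp only [Real.norm_eq_abs, hφdef]
    rw [abs_mul, abs_mul, abs_of_nonneg hC0]
    exact mul_le_mul_of_nonneg_right (hC x) (abs_nonneg _)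
  set ψ : ℝ → ℝ := fun x => (deriv h x)^2 * g' x with hψdef
  have hψm : Measurable ψ := (hdm.pow_const 2).mul hg'm.measurable
  have hψint : Integrable ψ ρ := by
    refine Integrable.mono' (hg'int.abs.const_mul (C^2)) hψm.aestronglyMeasurable ?_
    filter_upwards with x
    simp only [Real.norm_eq_abs, hψdef]
    rw [abs_mul]
    have h1 : |(deriv h x)^2| ≤ C^2 := by
      rw [abs_pow, sq_abs]
      nlinarith [hC x, abs_nonneg (deriv h x), neg_abs_le (deriv h x), le_abs_self (deriv h x)]
    exact mul_le_mul_of_nonneg_right h1 (abs_nonneg _)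
  set Y : ℕ → Ω → ℝ := fun n ω => φ (X n ω) with hYdef
  have hXae : ∀ n, AEMeasurable (X n) ℙ := fun n => (hmeas n).aemeasurable
  have hY2 : ∀ n, MemLp (Y n) 2 ℙ := by
    intro n
    have h1 : AEStronglyMeasurable φ (Measure.map (X n) ℙ) := by
      rw [hlaw n]; exact hφm.aestronglyMeasurable
    have h2 : MemLp φ 2 (Measure.map (X n) ℙ) := by rw [hlaw n]; exact hφ2
    exact (memLp_map_measure_iff h1 (hXae n)).mp h2
  have hYind : ∀ m n, m ≠ n → ProbabilityTheory.IndepFun (Y m) (Y n) ℙ :=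
    fun m n hmn => (hindep.indepFun hmn).comp hφm hφm
  set μ₁ := ∫ x, φ x ∂ρ with hμ₁def
  set μ₂ := ∫ x, (φ x)^2 ∂ρ with hμ₂def
  have hμ₂0 : 0 ≤ μ₂ := integral_nonneg fun x => sq_nonneg _
  have hI1 : ∀ n, ∫ ω, Y n ω ∂ℙ = μ₁ := by
    intro n
    have := integral_map (hXae n) (f := φ)
      (by rw [hlaw n]; exact hφm.aestronglyMeasurable)
    rw [hlaw n] at this
    exact this.symm
  have hI2 : ∀ n, ∫ ω, (Y n ω)^2 ∂ℙ = μ₂ := by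
    intro n
    have := integral_map (hXae n) (f := fun x => (φ x)^2)
      (by rw [hlaw n]; exact (hφm.pow_const 2).aestronglyMeasurable)
    rw [hlaw n] at this
    exact this.symm
  set T := ∫ x, ψ x ∂ρ with hTdef
  set T' := ∫ x, |ψ x| ∂ρ with hT'def
  have hTT' : T ≤ T' := by
    refine le_trans (le_abs_self T) ?_
    simpa [Real.norm_eq_abs] using norm_integral_le_integral_norm (μ := ρ) ψ
  have hT'0 : 0 ≤ T' := integral_nonneg fun x => abs_nonneg _
  have hZint : ∀ n, Integrable (fun ω => ψ (X n ω)) ℙ := by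
    intro n
    have h1 : AEStronglyMeasurable ψ (Measure.map (X n) ℙ) := by
      rw [hlaw n]; exact hψm.aestronglyMeasurable
    have h2 : Integrable ψ (Measure.map (X n) ℙ) := by rw [hlaw n]; exact hψint
    exact (integrable_map_measure h1 (hXae n)).mp h2
  have hZT : ∀ n, ∫ ω, ψ (X n ω) ∂ℙ = T := by
    intro n
    have := integral_map (hXae n) (f := ψ)
      (by rw [hlaw n]; exact hψm.aestronglyMeasurable)
    rw [hlaw n] at this
    exact this.symm
  set B := μ₂ + T' with hBdef
  have hB0 : 0 ≤ B := add_nonneg hμ₂0 hT'0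
  intro ε hε
  refine ⟨⌈4 * B / ε⌉₊ + 1, fun M N hM hN => ?_⟩
  have hM1 : 1 ≤ M := le_trans (Nat.le_add_left 1 _) hM
  have hN1 : 1 ≤ N := le_trans (Nat.le_add_left 1 _) hN
  set s := Icc 1 (max M N) with hsdef
  have hae : ∀ n : ℕ, ∀ᵐ ω ∂ℙ, f (X n ω) = f' (X n ω) ∧ g (X n ω) = g' (X n ω) := by
    intro n
    have h1 : (f ∘ X n) =ᵐ[ℙ] (f' ∘ X n) :=
      ae_eq_comp (hXae n) (by rw [hlaw n]; exact hff')
    have h2 : (g ∘ X n) =ᵐ[ℙ] (g' ∘ X n) :=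
      ae_eq_comp (hXae n) (by rw [hlaw n]; exact hgg')
    filter_upwards [h1, h2] with ω e1 e2 using ⟨e1, e2⟩
  have haeAll : ∀ᵐ ω ∂ℙ, ∀ n ∈ s, f (X n ω) = f' (X n ω) ∧ g (X n ω) = g' (X n ω) :=
    (eventually_all_finset s).2 fun n _ => hae n
  have hGae : (fun ω => G M N ω) =ᵐ[ℙ]
      fun ω => (∑ n ∈ s, c M N n * Y n ω)^2 + ∑ n ∈ s, (c M N n)^2 * ψ (X n ω) := by
    filter_upwards [haeAll] with ω hω
    rw [hG M N ω, ← hsdef]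
    congr 1
    · congr 1
      refine Finset.sum_congr rfl fun n hn => ?_
      rw [(hω n hn).1, hYdef]
      simp only [hφdef]
      ring
    · refine Finset.sum_congr rfl fun n hn => ?_
      rw [(hω n hn).2, hψdef]
      ring
  rw [integral_congr_ae hGae]
  have hsum2 : MemLp (fun ω => ∑ n ∈ s, c M N n * Y n ω) 2 ℙ :=
    memLp_finset_sum s fun n _ => ((hY2 n).const_mul _)
  have hint1 : Integrable (fun ω => (∑ n ∈ s, c M N n * Y n ω)^2) ℙ := hsum2.integrable_sq
  have hint2 : Integrable (fun ω => ∑ n ∈ s, (c M N n)^2 * ψ (X n ω)) ℙ :=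
    integrable_finset_sum _ fun n _ => (hZint n).const_mul _
  rw [integral_add hint1 hint2,
    integral_finset_sum _ (fun n _ => (hZint n).const_mul _)]
  have e1 : ∫ ω, (∑ n ∈ s, c M N n * Y n ω)^2 ∂ℙ
      = (∑ n ∈ s, c M N n)^2 * μ₁^2 + (∑ n ∈ s, (c M N n)^2) * (μ₂ - μ₁^2) :=
    expand_sq_integral ℙ s (c M N) Y hY2 hYind μ₁ μ₂ (fun n _ => hI1 n) (fun n _ => hI2 n)
  have e2 : ∑ n ∈ s, ∫ ω, (c M N n)^2 * ψ (X n ω) ∂ℙ = (∑ n ∈ s, (c M N n)^2) * T := by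
    rw [Finset.sum_mul]
    exact Finset.sum_congr rfl fun n _ => by rw [integral_const_mul, hZT n]
  rw [e1, e2]
  have hc0 : ∑ n ∈ s, c M N n = 0 := by
    simp_rw [hc]; exact sum_c_zero M N hM1 hN1
  rw [hc0]
  have hcs : ∑ n ∈ s, (c M N n)^2 ≤ 2/M + 2/N := by
    simp_rw [hc]; exact sum_c_sq_le M N hM1 hN1
  have hcs0 : 0 ≤ ∑ n ∈ s, (c M N n)^2 := Finset.sum_nonneg fun n _ => sq_nonneg _
  set K : ℕ := ⌈4 * B / ε⌉₊ + 1 with hKdef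
  have hKpos : (0:ℝ) < K := by positivity
  have hMK : (K:ℝ) ≤ M := by exact_mod_cast hM
  have hNK : (K:ℝ) ≤ N := by exact_mod_cast hN
  have hMpos : (0:ℝ) < M := lt_of_lt_of_le hKpos hMK
  have hNpos : (0:ℝ) < N := lt_of_lt_of_le hKpos hNK
  have key : (∑ n ∈ s, (c M N n)^2) * (μ₂ - μ₁^2) + (∑ n ∈ s, (c M N n)^2) * T
      ≤ (2/M + 2/N) * B := by
    have h1 : (μ₂ - μ₁^2) + T ≤ B := by
      have := sq_nonneg μ₁
      rw [hBdef]; linarith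
    calc (∑ n ∈ s, (c M N n)^2) * (μ₂ - μ₁^2) + (∑ n ∈ s, (c M N n)^2) * T
        = (∑ n ∈ s, (c M N n)^2) * ((μ₂ - μ₁^2) + T) := by ring
      _ ≤ (∑ n ∈ s, (c M N n)^2) * B := mul_le_mul_of_nonneg_left h1 hcs0
      _ ≤ (2/M + 2/N) * B := mul_le_mul_of_nonneg_right hcs hB0
  have h4K : 2/(M:ℝ) + 2/N ≤ 4/K := by
    have hm : 2/(M:ℝ) ≤ 2/K := by
      apply div_le_div_of_nonneg_left (by norm_num) hKpos hMK
    have hn : 2/(N:ℝ) ≤ 2/K := by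
      apply div_le_div_of_nonneg_left (by norm_num) hKpos hNK
    have : 4/(K:ℝ) = 2/K + 2/K := by ring
    linarith
  have hfin : (4/(K:ℝ)) * B < ε := by
    have h1 : 4*B/ε ≤ (⌈4*B/ε⌉₊ : ℝ) := Nat.le_ceil _
    have h2 : ((⌈4*B/ε⌉₊:ℝ)) < K := by
      rw [hKdef]; push_cast; linarith
    have h3 : 4*B/ε < K := lt_of_le_of_lt h1 h2
    have h4 : 4*B < ε * K := by
      have := (div_lt_iff₀ hε).mp h3
      linarith
    rw [div_mul_eq_mul_div, div_lt_iff₀ hKpos]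
    linarith
  have hstep : (2/(M:ℝ) + 2/N) * B ≤ (4/(K:ℝ)) * B :=
    mul_le_mul_of_nonneg_right h4K hB0
  calc (0:ℝ)^2 * μ₁^2 + (∑ n ∈ s, (c M N n)^2) * (μ₂ - μ₁^2)
        + (∑ n ∈ s, (c M N n)^2) * T
      = (∑ n ∈ s, (c M N n)^2) * (μ₂ - μ₁^2) + (∑ n ∈ s, (c M N n)^2) * T := by ring
    _ ≤ (2/M + 2/N) * B := key
    _ ≤ (4/(K:ℝ)) * B := hstep
    _ < ε := hfin
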